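/- (Dirac equation in the homogeneous field on the lattice.) Let m ≥ 0, ε > 0, and ξ, η ∈ εℤ with ξ, η > 0. Then: a₁(ξ−η+ε, ξ+η+ε, m, ε, u_ε) = (1/√(1+m²ε²)) · u_ε(ξ−η+3ε/2, ξ+η+ε/2) · ( a₁(ξ−η+2ε, ξ+η, m, ε, u_ε) + mε·a₂(ξ−η+2ε, ξ+η, m, ε, u_ε) ), and a₂(ξ−η+ε, ξ+η+ε, m, ε, u_ε) = (1/√(1+m²ε²)) · u_ε(ξ−η+ε/2, ξ+η+ε/2) · ( −mε·a₁(ξ−η, ξ+η, m, ε, u_ε) + a₂(ξ−η, ξ+η, m, ε, u_ε) ). -/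

import Mathlib

/-!
Split the sum over checker paths according to the direction of the last move. A path starting
with a right move has an even number of turns exactly when it also ends with a right move, so,
after the prefactor `i`, the paths ending to the right make up `a₂` and those ending to the left
make up `a₁`. Deleting the last move of a path with `n + 1 > 1` moves multiplies its weight by the
field on the last edge, and by `-imε` when the last move is a turn; together with the ratio
`(1 + m²ε²)^(-1/2)` of the normalizations this is the Dirac equation, in any field `u`.
-/

open scoped BigOperators

/-- Direction of a checker move encoded by a Boolean: `true` = upwards-right
(vector `(ε,ε)`), `false` = upwards-left (vector `(-ε,ε)`). -/
def dirZ (b : Bool) : ℤ := if b then 1 else -1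

/-- The `k`-th direction of a path with `n` moves (dummy value `false` out of range). -/
def extd {n : ℕ} (d : Fin n → Bool) (k : ℕ) : Bool := if h : k < n then d ⟨k, h⟩ else false

/-- The (integer) space coordinate of a checker path after `k` moves. -/
def pathPos {n : ℕ} (d : Fin n → Bool) (k : ℕ) : ℤ := ∑ i ∈ Finset.range k, dirZ (extd d i)

/-- The number of turns of a checker path. -/
def pathTurns {n : ℕ} (d : Fin n → Bool) : ℕ :=
  ((Finset.range n).filter (fun k => 0 < k ∧ extd d (k - 1) ≠ extd d k)).card

/-- Feynman checkers wave function `a(x,t,m,ε,u)` in an external field `u`, where the field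
`u` is given as a function of the midpoint of an auxiliary edge. -/
noncomputable def kwf (m ε : ℝ) (u : ℝ → ℝ → ℝ) (x t : ℝ) : ℂ :=
  (((1 + m ^ 2 * ε ^ 2) ^ ((1 - t / ε) / 2) : ℝ) : ℂ) * Complex.I *
    ∑ d ∈ Finset.univ.filter
        (fun d : Fin ((⌊t / ε⌋).toNat) → Bool =>
          extd d 0 = true ∧ pathPos d ((⌊t / ε⌋).toNat) = ⌊x / ε⌋),
      (-(Complex.I) * (m * ε)) ^ (pathTurns d) *
        ∏ k ∈ Finset.range ((⌊t / ε⌋).toNat),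
          ((u (ε * pathPos d k + ε * (dirZ (extd d k)) / 2) (ε * k + ε / 2) : ℝ) : ℂ)

/-- `a₁(x,t,m,ε,u)`: the real part of the wave function. -/
noncomputable def ka1 (m ε : ℝ) (u : ℝ → ℝ → ℝ) (x t : ℝ) : ℝ := (kwf m ε u x t).re

/-- `a₂(x,t,m,ε,u)`: the imaginary part of the wave function. -/
noncomputable def ka2 (m ε : ℝ) (u : ℝ → ℝ → ℝ) (x t : ℝ) : ℝ := (kwf m ε u x t).im

/-- `P(x,t,m,ε,u)`: the probability to find the electron at `(x,t)`. -/
noncomputable def kP (m ε : ℝ) (u : ℝ → ℝ → ℝ) (x t : ℝ) : ℝ := ‖kwf m ε u x t‖ ^ 2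

/- The homogeneous electromagnetic field `u_ε`, as a function of the midpoint `(X,T)`
of an auxiliary edge: for `(x,t) ∈ εℤ²`, `u_ε(x+ε/2, t+ε/2) = -1` iff `(t-x)/(4ε) ∈ ℤ`. -/
open Classical in
noncomputable def uhom (ε : ℝ) : ℝ → ℝ → ℝ := fun X T =>
  if ∃ k : ℤ, T - X = 4 * ε * k then -1 else 1
/-- Extended binomial coefficient: `C(a,b) = 0` if `a < 0` or `b < 0`. -/
def zchoose (a b : ℤ) : ℤ := if 0 ≤ a ∧ 0 ≤ b then (a.toNat).choose (b.toNat) else 0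

/-- Bessel function of the first kind of order 0 (power series). -/
noncomputable def besselJ0 (z : ℝ) : ℝ :=
  ∑' j : ℕ, (-1 : ℝ) ^ j * (z / 2) ^ (2 * j) / ((j.factorial : ℝ)) ^ 2

/-- Bessel function of the first kind of order 1 (power series). -/
noncomputable def besselJ1 (z : ℝ) : ℝ :=
  ∑' j : ℕ, (-1 : ℝ) ^ j * (z / 2) ^ (2 * j + 1) / ((j.factorial : ℝ) * ((j + 1).factorial : ℝ))

/-- Truncated hypergeometric sum `₂F₁(a,b;c;z)` with integer parameters,
summed for `k = 0, …, K`. -/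
noncomputable def hypF (a b c : ℤ) (K : ℕ) (z : ℝ) : ℝ :=
  ∑ k ∈ Finset.range (K + 1),
    (∏ l ∈ Finset.range k, (((a + l) * (b + l) : ℤ) : ℝ) / (((1 + l) * (c + l) : ℤ) : ℝ)) * z ^ k

/-- `ω_p = (1/(2ε))·arcsin(sin(2pε)/(1+m²ε²))`. -/
noncomputable def omg (m ε p : ℝ) : ℝ :=
  (1 / (2 * ε)) * Real.arcsin (Real.sin (2 * p * ε) / (1 + m ^ 2 * ε ^ 2))

/-- `(-1)^q` for a real exponent `q`, with the convention `(-1)^(n/2) = iⁿ`: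
`neg1pow q = exp(iπq)`. -/
noncomputable def neg1pow (q : ℝ) : ℂ := Complex.exp (Complex.I * Real.pi * q)

/-- The Airy function `Ai(λ) = (1/π)·lim_{R→∞} ∫₀^R cos(y³/3 + λy) dy`. -/
noncomputable def AiryAi (lam : ℝ) : ℝ :=
  (1 / Real.pi) *
    Filter.limUnder Filter.atTop (fun R : ℝ => ∫ y in (0 : ℝ)..R, Real.cos (y ^ 3 / 3 + lam * y))

/-- The function `θ̃(v)` from Theorem `Airy` of the paper. -/
noncomputable def thetaTilde (m ε v : ℝ) : ℝ :=
  (1 / (2 * ε)) *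
    (|v| * Real.arccos (|v| * Real.sqrt ((1 + m ^ 2 * ε ^ 2) ^ 2 - 1) / Real.sqrt (1 - v ^ 2)) -
      Real.arccos (Real.sqrt ((1 + m ^ 2 * ε ^ 2) ^ 2 - 1) /
        ((1 + m ^ 2 * ε ^ 2) * Real.sqrt (1 - v ^ 2))))

open Complex Finset

def turnCount (g : ℕ → Bool) (n : ℕ) : ℕ :=
  ((range n).filter (fun k => 0 < k ∧ g (k - 1) ≠ g k)).card

lemma pathTurns_eq_turnCount {n : ℕ} (d : Fin n → Bool) : pathTurns d = turnCount (extd d) n :=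
  rfl

lemma turnCount_succ (g : ℕ → Bool) (n : ℕ) :
    turnCount g (n + 1) = turnCount g n + if 0 < n ∧ g (n - 1) ≠ g n then 1 else 0 := by
  simp only [turnCount, card_filter, sum_range_succ]

lemma turnCount_congr {g g' : ℕ → Bool} {n : ℕ} (h : ∀ k < n, g k = g' k) :
    turnCount g n = turnCount g' n := by
  unfold turnCount
  congr 1
  refine filter_congr fun k hk => ?_
  have hk := mem_range.1 hk
  rw [h k hk, h (k - 1) (by omega)]

lemma even_turnCount_iff {g : ℕ → Bool} (hg : g 0 = true) (n : ℕ) :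
    Even (turnCount g n) ↔ g (n - 1) = true := by
  induction n with
  | zero => simp [turnCount, hg]
  | succ n ih =>
    rcases n.eq_zero_or_pos with rfl | hn
    · rw [turnCount_succ]
      simp [turnCount, hg]
    · rw [turnCount_succ, Nat.add_sub_cancel]
      cases hgn : g n <;> cases hgn' : g (n - 1) <;> simp_all [Nat.even_add_one]

section Snoc

variable {n : ℕ} (d : Fin n → Bool) (b : Bool)

lemma extd_snoc_of_lt {k : ℕ} (h : k < n) :
    extd (Fin.snoc d b : Fin (n + 1) → Bool) k = extd d k := by
  simp only [extd, dif_pos h, dif_pos (Nat.lt_succ_of_lt h)]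
  exact Fin.snoc_castSucc (α := fun _ => Bool) b d ⟨k, h⟩

lemma extd_snoc_last : extd (Fin.snoc d b : Fin (n + 1) → Bool) n = b := by
  simp only [extd, dif_pos n.lt_succ_self]
  exact Fin.snoc_last (α := fun _ => Bool) b d

lemma pathPos_snoc_of_le {k : ℕ} (h : k ≤ n) :
    pathPos (Fin.snoc d b : Fin (n + 1) → Bool) k = pathPos d k :=
  sum_congr rfl fun i hi => by rw [extd_snoc_of_lt d b ((mem_range.1 hi).trans_le h)]

lemma pathPos_snoc_succ :
    pathPos (Fin.snoc d b : Fin (n + 1) → Bool) (n + 1) = pathPos d n + dirZ b := by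
  rw [pathPos, sum_range_succ, extd_snoc_last, ← pathPos, pathPos_snoc_of_le d b le_rfl]

lemma pathTurns_snoc (hn : 0 < n) :
    pathTurns (Fin.snoc d b : Fin (n + 1) → Bool)
      = pathTurns d + if extd d (n - 1) = b then 0 else 1 := by
  rw [pathTurns_eq_turnCount, turnCount_succ, turnCount_congr (fun k hk => extd_snoc_of_lt d b hk),
    extd_snoc_of_lt d b (by omega), extd_snoc_last]
  split_ifs <;> simp_all [pathTurns_eq_turnCount]

end Snoc

noncomputable def pathWeight (m ε : ℝ) (u : ℝ → ℝ → ℝ) {n : ℕ} (d : Fin n → Bool) : ℂ :=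
  (-I * (m * ε)) ^ pathTurns d *
    ∏ k ∈ range n, ((u (ε * pathPos d k + ε * dirZ (extd d k) / 2) (ε * k + ε / 2) : ℝ) : ℂ)

noncomputable def lastMoveSum (m ε : ℝ) (u : ℝ → ℝ → ℝ) (n : ℕ) (X : ℤ) (b : Bool) : ℂ :=
  ∑ d ∈ univ.filter (fun d : Fin n → Bool =>
      extd d 0 = true ∧ pathPos d n = X ∧ extd d (n - 1) = b),
    pathWeight m ε u d

section Weights

variable (m ε : ℝ) (u : ℝ → ℝ → ℝ)

lemma pathWeight_snoc {n : ℕ} (hn : 0 < n) (d : Fin n → Bool) (b : Bool) :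
    pathWeight m ε u (Fin.snoc d b : Fin (n + 1) → Bool)
      = (if extd d (n - 1) = b then 1 else -I * (m * ε)) * pathWeight m ε u d *
        (u (ε * pathPos d n + ε * dirZ b / 2) (ε * n + ε / 2) : ℂ) := by
  have hprefix : ∀ k ∈ range n,
      ((u (ε * pathPos (Fin.snoc d b : Fin (n + 1) → Bool) k
          + ε * dirZ (extd (Fin.snoc d b : Fin (n + 1) → Bool) k) / 2) (ε * k + ε / 2) : ℝ) : ℂ)
      = u (ε * pathPos d k + ε * dirZ (extd d k) / 2) (ε * k + ε / 2) := fun k hk => by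
    rw [pathPos_snoc_of_le d b (mem_range.1 hk).le, extd_snoc_of_lt d b (mem_range.1 hk)]
  rw [pathWeight, pathWeight, pathTurns_snoc d b hn, pow_add, prod_range_succ,
    prod_congr rfl hprefix, extd_snoc_last, pathPos_snoc_of_le d b le_rfl]
  split_ifs <;> ring

lemma lastMoveSum_succ {n : ℕ} (hn : 0 < n) (X : ℤ) (b : Bool) :
    lastMoveSum m ε u (n + 1) (X + dirZ b) b
      = (u (ε * X + ε * dirZ b / 2) (ε * n + ε / 2) : ℂ) *
        (lastMoveSum m ε u n X b + -I * (m * ε) * lastMoveSum m ε u n X (!b)) := by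
  simp only [lastMoveSum, sum_filter, mul_add, mul_sum, ← sum_add_distrib]
  rw [← (Fin.snocEquiv fun _ => Bool).sum_comp, Fintype.sum_prod_type_right]
  refine sum_congr rfl fun d _ => ?_
  have hsnoc (c : Bool) : (Fin.snocEquiv fun _ => Bool) (c, d) = Fin.snoc d c := rfl
  simp only [Fintype.sum_bool, hsnoc, Nat.add_sub_cancel, extd_snoc_last,
    extd_snoc_of_lt d _ hn, pathPos_snoc_succ, pathWeight_snoc m ε u hn]
  by_cases hX : pathPos d n = X
  · subst hX
    cases b <;> cases extd d (n - 1) <;> simp <;> split_ifs <;> ring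
  · cases b <;> simp [hX]

end Weights

lemma neg_I_mul_ofReal_sq (c : ℝ) : (-I * c) ^ 2 = ((-c ^ 2 : ℝ) : ℂ) := by
  push_cast
  ring_nf
  rw [I_sq]
  ring

lemma im_neg_I_mul_pow_mul_ofReal {T : ℕ} (hT : Even T) (c r : ℝ) :
    ((-I * c) ^ T * r).im = 0 := by
  obtain ⟨k, rfl⟩ := hT
  rw [← two_mul, pow_mul, neg_I_mul_ofReal_sq, ← ofReal_pow, ← ofReal_mul, ofReal_im]

lemma re_neg_I_mul_pow_mul_ofReal {T : ℕ} (hT : Odd T) (c r : ℝ) :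
    ((-I * c) ^ T * r).re = 0 := by
  obtain ⟨k, rfl⟩ := hT
  rw [pow_succ, pow_mul, neg_I_mul_ofReal_sq, ← ofReal_pow]
  simp only [mul_re, mul_im, neg_re, neg_im, I_re, I_im, ofReal_re, ofReal_im]
  ring

section Parity

variable (m ε : ℝ) (u : ℝ → ℝ → ℝ)

lemma pathWeight_eq {n : ℕ} (d : Fin n → Bool) :
    pathWeight m ε u d = (-I * ((m * ε : ℝ) : ℂ)) ^ pathTurns d *
      ((∏ k ∈ range n, u (ε * pathPos d k + ε * dirZ (extd d k) / 2) (ε * k + ε / 2) : ℝ) : ℂ) := by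
  rw [pathWeight, ofReal_prod, ofReal_mul]

lemma im_lastMoveSum_true (n : ℕ) (X : ℤ) : (lastMoveSum m ε u n X true).im = 0 := by
  rw [lastMoveSum, im_sum]
  refine sum_eq_zero fun d hd => ?_
  obtain ⟨hfirst, -, hlast⟩ := (mem_filter.1 hd).2
  rw [pathWeight_eq]
  exact im_neg_I_mul_pow_mul_ofReal ((even_turnCount_iff hfirst n).2 hlast) _ _

lemma re_lastMoveSum_false (n : ℕ) (X : ℤ) : (lastMoveSum m ε u n X false).re = 0 := by
  rw [lastMoveSum, re_sum]
  refine sum_eq_zero fun d hd => ?_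
  obtain ⟨hfirst, -, hlast⟩ := (mem_filter.1 hd).2
  have hodd : Odd (pathTurns d) := by
    rw [← Nat.not_even_iff_odd, pathTurns_eq_turnCount, even_turnCount_iff hfirst, hlast]
    exact Bool.false_ne_true
  rw [pathWeight_eq]
  exact re_neg_I_mul_pow_mul_ofReal hodd _ _

end Parity

section Lattice

variable {m ε : ℝ} (u : ℝ → ℝ → ℝ)

lemma sum_pathWeight_eq_lastMoveSum_add (n : ℕ) (X : ℤ) :
    ∑ d ∈ univ.filter (fun d : Fin n → Bool => extd d 0 = true ∧ pathPos d n = X),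
        pathWeight m ε u d
      = lastMoveSum m ε u n X true + lastMoveSum m ε u n X false := by
  rw [← sum_filter_add_sum_filter_not _ (fun d => extd d (n - 1) = true), filter_filter,
    filter_filter]
  simp only [lastMoveSum, Bool.not_eq_true, and_assoc]

lemma kwf_lattice (hε : 0 < ε) (X : ℤ) (n : ℕ) :
    kwf m ε u (ε * X) (ε * n)
      = (((1 + m ^ 2 * ε ^ 2) ^ ((1 - n) / 2 : ℝ) : ℝ) : ℂ) * I *
        (lastMoveSum m ε u n X true + lastMoveSum m ε u n X false) := by
  rw [kwf, mul_div_cancel_left₀ _ hε.ne', mul_div_cancel_left₀ _ hε.ne', Int.floor_intCast,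
    Int.floor_natCast, Int.toNat_natCast]
  exact congrArg _ (sum_pathWeight_eq_lastMoveSum_add u n X)

lemma ka1_lattice (hε : 0 < ε) (X : ℤ) (n : ℕ) :
    ka1 m ε u (ε * X) (ε * n)
      = -((1 + m ^ 2 * ε ^ 2) ^ ((1 - n) / 2 : ℝ) * (lastMoveSum m ε u n X false).im) := by
  rw [ka1, kwf_lattice u hε]
  simp only [mul_re, mul_im, add_re, add_im, I_re, I_im, ofReal_re, ofReal_im,
    im_lastMoveSum_true]
  ring

lemma ka2_lattice (hε : 0 < ε) (X : ℤ) (n : ℕ) :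
    ka2 m ε u (ε * X) (ε * n)
      = (1 + m ^ 2 * ε ^ 2) ^ ((1 - n) / 2 : ℝ) * (lastMoveSum m ε u n X true).re := by
  rw [ka2, kwf_lattice u hε]
  simp only [mul_re, mul_im, add_re, add_im, I_re, I_im, ofReal_re, ofReal_im,
    re_lastMoveSum_false]
  ring

end Lattice

section Recurrence

variable (m ε : ℝ) (u : ℝ → ℝ → ℝ) {n : ℕ} (hn : 0 < n) (X : ℤ)
include hn

lemma re_lastMoveSum_succ_true :
    (lastMoveSum m ε u (n + 1) X true).re
      = u (ε * X - ε / 2) (ε * n + ε / 2) *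
        ((lastMoveSum m ε u n (X - 1) true).re
          + m * ε * (lastMoveSum m ε u n (X - 1) false).im) := by
  have h := lastMoveSum_succ m ε u hn (X - 1) true
  rw [show X - 1 + dirZ true = X by simp [dirZ],
    show ε * ((X - 1 : ℤ) : ℝ) + ε * (dirZ true : ℤ) / 2 = ε * X - ε / 2 by simp [dirZ]; ring] at h
  rw [h]
  simp only [mul_re, mul_im, add_re, neg_re, neg_im, I_re, I_im, ofReal_re, ofReal_im,
    Bool.not_true]
  ring

lemma im_lastMoveSum_succ_false :
    (lastMoveSum m ε u (n + 1) X false).im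
      = u (ε * X + ε / 2) (ε * n + ε / 2) *
        ((lastMoveSum m ε u n (X + 1) false).im
          - m * ε * (lastMoveSum m ε u n (X + 1) true).re) := by
  have h := lastMoveSum_succ m ε u hn (X + 1) false
  rw [show X + 1 + dirZ false = X by simp [dirZ],
    show ε * ((X + 1 : ℤ) : ℝ) + ε * (dirZ false : ℤ) / 2 = ε * X + ε / 2 by simp [dirZ]; ring] at h
  rw [h]
  simp only [mul_re, mul_im, add_im, neg_re, neg_im, I_re, I_im, ofReal_re, ofReal_im,
    Bool.not_false]
  ring

end Recurrence

lemma one_add_sq_rpow_succ (m ε : ℝ) (n : ℕ) :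
    (1 + m ^ 2 * ε ^ 2) ^ ((1 - ((n + 1 : ℕ) : ℝ)) / 2)
      = 1 / √(1 + m ^ 2 * ε ^ 2) * (1 + m ^ 2 * ε ^ 2) ^ ((1 - n) / 2 : ℝ) := by
  rw [Real.sqrt_eq_rpow, one_div, ← Real.rpow_neg (by positivity), ← Real.rpow_add (by positivity)]
  push_cast
  ring_nf

section Dirac

variable {m ε : ℝ} (hε : 0 < ε) (u : ℝ → ℝ → ℝ) {n : ℕ} (hn : 0 < n) (Y : ℤ)
include hε hn

lemma ka1_lattice_dirac :
    ka1 m ε u (ε * Y + ε) (ε * n + ε)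
      = 1 / √(1 + m ^ 2 * ε ^ 2) * u (ε * Y + 3 * ε / 2) (ε * n + ε / 2) *
        (ka1 m ε u (ε * Y + 2 * ε) (ε * n) + m * ε * ka2 m ε u (ε * Y + 2 * ε) (ε * n)) := by
  rw [show ε * Y + ε = ε * ((Y + 1 : ℤ) : ℝ) by push_cast; ring,
    show ε * n + ε = ε * ((n + 1 : ℕ) : ℝ) by push_cast; ring,
    show ε * Y + 2 * ε = ε * ((Y + 1 + 1 : ℤ) : ℝ) by push_cast; ring,
    ka1_lattice u hε, ka1_lattice u hε, ka2_lattice u hε, one_add_sq_rpow_succ,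
    im_lastMoveSum_succ_false m ε u hn,
    show ε * ((Y + 1 : ℤ) : ℝ) + ε / 2 = ε * Y + 3 * ε / 2 by push_cast; ring]
  ring

lemma ka2_lattice_dirac :
    ka2 m ε u (ε * Y + ε) (ε * n + ε)
      = 1 / √(1 + m ^ 2 * ε ^ 2) * u (ε * Y + ε / 2) (ε * n + ε / 2) *
        (-(m * ε) * ka1 m ε u (ε * Y) (ε * n) + ka2 m ε u (ε * Y) (ε * n)) := by
  rw [show ε * Y + ε = ε * ((Y + 1 : ℤ) : ℝ) by push_cast; ring,
    show ε * n + ε = ε * ((n + 1 : ℕ) : ℝ) by push_cast; ring,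
    ka2_lattice u hε, ka1_lattice u hε, ka2_lattice u hε, one_add_sq_rpow_succ,
    re_lastMoveSum_succ_true m ε u hn, add_sub_cancel_right,
    show ε * ((Y + 1 : ℤ) : ℝ) - ε / 2 = ε * Y + ε / 2 by push_cast; ring]
  ring

end Dirac

theorem dirac_equation_on_lattice_general (m ε : ℝ) (hε : 0 < ε) (ξ η : ℝ)
    (hξ : ∃ k : ℤ, ξ = ε * (k : ℝ)) (hη : ∃ k : ℤ, η = ε * (k : ℝ))
    (hξpos : 0 < ξ) (hηpos : 0 < η) :
    ka1 m ε (uhom ε) (ξ - η + ε) (ξ + η + ε)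
      = (1 / Real.sqrt (1 + m ^ 2 * ε ^ 2)) * uhom ε (ξ - η + 3 * ε / 2) (ξ + η + ε / 2)
        * (ka1 m ε (uhom ε) (ξ - η + 2 * ε) (ξ + η)
            + m * ε * ka2 m ε (uhom ε) (ξ - η + 2 * ε) (ξ + η)) ∧
    ka2 m ε (uhom ε) (ξ - η + ε) (ξ + η + ε)
      = (1 / Real.sqrt (1 + m ^ 2 * ε ^ 2)) * uhom ε (ξ - η + ε / 2) (ξ + η + ε / 2)
        * (-(m * ε) * ka1 m ε (uhom ε) (ξ - η) (ξ + η)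
            + ka2 m ε (uhom ε) (ξ - η) (ξ + η)) := by
  obtain ⟨a, rfl⟩ := hξ
  obtain ⟨b, rfl⟩ := hη
  have ha : 0 < a := by exact_mod_cast (mul_pos_iff_of_pos_left hε).1 hξpos
  have hb : 0 < b := by exact_mod_cast (mul_pos_iff_of_pos_left hε).1 hηpos
  have hn : 0 < (a + b).toNat := by omega
  have hsum : ε * a + ε * b = ε * ((a + b).toNat : ℕ) := by
    rw [← Int.cast_natCast, Int.toNat_of_nonneg (by omega)]
    push_cast
    ring
  rw [hsum, show ε * a - ε * b = ε * ((a - b : ℤ) : ℝ) by push_cast; ring]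
  exact ⟨ka1_lattice_dirac hε _ hn _, ka2_lattice_dirac hε _ hn _⟩

/-- Lemma (Dirac equation in the homogeneous electromagnetic field on the lattice). -/
theorem dirac_equation_on_lattice (m ε : ℝ) (hm : 0 ≤ m) (hε : 0 < ε) (ξ η : ℝ)
    (hξ : ∃ k : ℤ, ξ = ε * (k : ℝ)) (hη : ∃ k : ℤ, η = ε * (k : ℝ))
    (hξpos : 0 < ξ) (hηpos : 0 < η) :
    ka1 m ε (uhom ε) (ξ - η + ε) (ξ + η + ε)
      = (1 / Real.sqrt (1 + m ^ 2 * ε ^ 2)) * uhom ε (ξ - η + 3 * ε / 2) (ξ + η + ε / 2)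
        * (ka1 m ε (uhom ε) (ξ - η + 2 * ε) (ξ + η)
            + m * ε * ka2 m ε (uhom ε) (ξ - η + 2 * ε) (ξ + η)) ∧
    ka2 m ε (uhom ε) (ξ - η + ε) (ξ + η + ε)
      = (1 / Real.sqrt (1 + m ^ 2 * ε ^ 2)) * uhom ε (ξ - η + ε / 2) (ξ + η + ε / 2)
        * (-(m * ε) * ka1 m ε (uhom ε) (ξ - η) (ξ + η)
            + ka2 m ε (uhom ε) (ξ - η) (ξ + η)) :=
  dirac_equation_on_lattice_general m ε hε ξ η hξ hη hξpos hηpos
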